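/- Super-multiplicativity of the weighted-Schatten standard-deviation size: for ℓ > 0, integers 1 ≤ j ≤ k-1, and traceless matrices A_1,…,A_k ∈ ℂ^{N×N}, one has (∏_{α=1}^{j} |||A_α|||_{2j,ℓ}) · (∏_{α=j+1}^{k} |||A_α|||_{2(k-j),ℓ}) ≤ C^k ∏_{α=1}^{k} |||A_α|||_{2k,ℓ} for a universal constant C. -/

import Mathlib

open Matrix MeasureTheory Asymptotics
open scoped ComplexOrder BigOperators

/-- Normalized trace `⟨M⟩ = N⁻¹ Tr M`. -/
noncomputable def ntr {N : ℕ} (M : Matrix (Fin N) (Fin N) ℂ) : ℂ :=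
  (N : ℂ)⁻¹ * M.trace

/-- `|A| = (A Aᴴ)^{1/2}`. -/
noncomputable def matAbs {N : ℕ} (A : Matrix (Fin N) (Fin N) ℂ) : Matrix (Fin N) (Fin N) ℂ :=
  (Matrix.posSemidef_self_mul_conjTranspose A).1.eigenvectorUnitary.1 *
    Matrix.diagonal ((↑) ∘ (√·) ∘ (Matrix.posSemidef_self_mul_conjTranspose A).1.eigenvalues) *
    (star (Matrix.posSemidef_self_mul_conjTranspose A).1.eigenvectorUnitary : Matrix (Fin N) (Fin N) ℂ)

/-- Euclidean operator norm of a matrix. -/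
noncomputable def opNorm {N : ℕ} (A : Matrix (Fin N) (Fin N) ℂ) : ℝ :=
  ‖Matrix.toEuclideanCLM (𝕜 := ℂ) A‖

/-- Normalized `p`-th Schatten norm `⟨|A|^p⟩^{1/p}`. -/
noncomputable def schatten {N : ℕ} (p : ℕ) (A : Matrix (Fin N) (Fin N) ℂ) : ℝ :=
  (ntr (matAbs A ^ p)).re ^ ((p : ℝ)⁻¹)

/-- The `ℓ`-weighted `(2,p)`-Schatten norm, `p ∈ [2,∞]` (`p = ⊤` uses the operator norm). -/
noncomputable def wnorm {N : ℕ} (p : ℕ∞) (ℓ : ℝ) (A : Matrix (Fin N) (Fin N) ℂ) : ℝ :=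
  p.recTopCoe (schatten 2 A / ℓ ^ ((2:ℝ)⁻¹) + opNorm A)
    (fun q => schatten 2 A / ℓ ^ ((2:ℝ)⁻¹) + schatten q A / ℓ ^ ((q : ℝ)⁻¹))

/-- Resolvent `G(ζ) = (W - ζ)⁻¹`. -/
noncomputable def resOf {N : ℕ} (W : Matrix (Fin N) (Fin N) ℂ) (ζ : ℂ) :
    Matrix (Fin N) (Fin N) ℂ :=
  (W - ζ • (1 : Matrix (Fin N) (Fin N) ℂ))⁻¹

/-- `Im G = (G - Gᴴ)/(2i)`. -/
noncomputable def imPart {N : ℕ} (G : Matrix (Fin N) (Fin N) ℂ) : Matrix (Fin N) (Fin N) ℂ :=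
  (2 * Complex.I)⁻¹ • (G - Gᴴ)

/-- Bessel function of the first kind of order one (integral representation). -/
noncomputable def besselJ1 (x : ℝ) : ℝ :=
  (1 / Real.pi) * ∫ θ in (0:ℝ)..Real.pi, Real.cos (θ - x * Real.sin θ)

/-- Semicircle density on `[-2,2]`. -/
noncomputable def rhoSC (x : ℝ) : ℝ := (1 / (2 * Real.pi)) * Real.sqrt (4 - x ^ 2)

/-- Stieltjes transform of the semicircle law. -/
noncomputable def mSC (z : ℂ) : ℂ := ∫ x in (-2:ℝ)..2, (rhoSC x : ℂ) / (x - z)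

/-- `φ(t) = J₁(2t)/t`, with `φ(0) = 1`. -/
noncomputable def phiSC (t : ℝ) : ℝ := if t = 0 then 1 else besselJ1 (2 * t) / t

/-! For `1 ≤ m ≤ k`, the normalized `ℓ^p` norms of the singular values, weighted by `ℓ⁻¹`,
satisfy `‖σ‖_{2m} ≤ ‖σ‖_2 + ‖σ‖_{2k}`; hence `|||A|||_{2m,ℓ} ≤ 2 |||A|||_{2k,ℓ}`, and comparing the
factors one by one gives the claim with `C = 2`. The interpolation bound comes from the pointwise
inequality `x^b t^(c-b) ≤ x^a t^(c-a) + x^c` for `a ≤ b ≤ c` (split at `x = t`), summed over the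
singular values and evaluated at `t = ‖σ‖_a + ‖σ‖_c`. -/

theorem pow_mul_pow_sub_le_add {R : Type*} [CommSemiring R] [LinearOrder R] [IsOrderedRing R]
    {x t : R} (hx : 0 ≤ x) (ht : 0 ≤ t) {a b c : ℕ} (hab : a ≤ b) (hbc : b ≤ c) :
    x ^ b * t ^ (c - b) ≤ x ^ a * t ^ (c - a) + x ^ c := by
  rcases le_total x t with hxt | htx
  · calc x ^ b * t ^ (c - b) = x ^ a * (x ^ (b - a) * t ^ (c - b)) := by
          rw [← mul_assoc, ← pow_add, Nat.add_sub_cancel' hab]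
      _ ≤ x ^ a * (t ^ (b - a) * t ^ (c - b)) := by gcongr
      _ = x ^ a * t ^ (c - a) := by rw [← pow_add]; congr 2; omega
      _ ≤ _ := le_add_of_nonneg_right (pow_nonneg hx c)
  · calc x ^ b * t ^ (c - b) ≤ x ^ b * x ^ (c - b) := by gcongr
      _ = x ^ c := by rw [← pow_add, Nat.add_sub_cancel' hbc]
      _ ≤ _ := le_add_of_nonneg_left (by positivity)

theorem rpow_inv_le_add_of_forall_mul_pow_le {Sa Sb Sc : ℝ} (hSa : 0 ≤ Sa) (hSb : 0 ≤ Sb)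
    (hSc : 0 ≤ Sc) {a b c : ℕ} (ha : a ≠ 0) (hab : a ≤ b) (hbc : b ≤ c)
    (h : ∀ t ≥ 0, Sb * t ^ (c - b) ≤ Sa * t ^ (c - a) + Sc) :
    Sb ^ (b⁻¹ : ℝ) ≤ Sa ^ (a⁻¹ : ℝ) + Sc ^ (c⁻¹ : ℝ) := by
  have hc : c ≠ 0 := by omega
  set X := Sa ^ (a⁻¹ : ℝ)
  set Y := Sc ^ (c⁻¹ : ℝ)
  have hX : 0 ≤ X := by positivity
  have hY : 0 ≤ Y := by positivity
  have hXa : X ^ a = Sa := Real.rpow_inv_natCast_pow hSa ha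
  have hYc : Y ^ c = Sc := Real.rpow_inv_natCast_pow hSc hc
  rcases (add_nonneg hX hY).eq_or_lt with hT | hT
  · obtain ⟨hX0, hY0⟩ := (add_eq_zero_iff_of_nonneg hX hY).1 hT.symm
    have hSb0 : Sb ≤ 0 := by simpa [← hXa, ← hYc, hX0, hY0, ha, hc] using h 1 zero_le_one
    rw [le_antisymm hSb0 hSb, Real.zero_rpow (by simp; omega)]
    positivity
  rw [Real.rpow_inv_le_iff_of_pos hSb hT.le (by simp; omega), Real.rpow_natCast]
  refine le_of_mul_le_mul_right ?_ (pow_pos hT (c - b))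
  calc Sb * (X + Y) ^ (c - b) ≤ X ^ a * (X + Y) ^ (c - a) + Y ^ c := by
        rw [hXa, hYc]; exact h _ hT.le
    _ ≤ X ^ a * (X + Y) ^ (c - a) + Y ^ a * (X + Y) ^ (c - a) := by
        gcongr
        calc Y ^ c = Y ^ a * Y ^ (c - a) := by rw [← pow_add, Nat.add_sub_cancel' (hab.trans hbc)]
          _ ≤ Y ^ a * (X + Y) ^ (c - a) := by gcongr; linarith
    _ ≤ (X + Y) ^ a * (X + Y) ^ (c - a) := by
        rw [← add_mul]; gcongr; exact pow_add_pow_le hX hY ha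
    _ = (X + Y) ^ b * (X + Y) ^ (c - b) := by
        rw [← pow_add, ← pow_add]; congr 1; omega

theorem sum_rpow_inv_le_add {ι : Type*} (s : Finset ι) {w x : ι → ℝ} (hw : ∀ i ∈ s, 0 ≤ w i)
    (hx : ∀ i ∈ s, 0 ≤ x i) {a b c : ℕ} (ha : a ≠ 0) (hab : a ≤ b) (hbc : b ≤ c) :
    (∑ i ∈ s, w i * x i ^ b) ^ (b⁻¹ : ℝ) ≤
      (∑ i ∈ s, w i * x i ^ a) ^ (a⁻¹ : ℝ) + (∑ i ∈ s, w i * x i ^ c) ^ (c⁻¹ : ℝ) := by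
  have hS : ∀ n, 0 ≤ ∑ i ∈ s, w i * x i ^ n := fun n =>
    Finset.sum_nonneg fun i hi => mul_nonneg (hw i hi) (pow_nonneg (hx i hi) n)
  refine rpow_inv_le_add_of_forall_mul_pow_le (hS a) (hS b) (hS c) ha hab hbc fun t ht => ?_
  rw [Finset.sum_mul, Finset.sum_mul, ← Finset.sum_add_distrib]
  refine Finset.sum_le_sum fun i hi => ?_
  linear_combination
    mul_le_mul_of_nonneg_left (pow_mul_pow_sub_le_add (hx i hi) ht hab hbc) (hw i hi)

theorem Matrix.trace_pow_unitary_conj {n R : Type*} [Fintype n] [DecidableEq n] [CommRing R]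
    [StarRing R] (U : unitary (Matrix n n R)) (D : Matrix n n R) (p : ℕ) :
    (((U : Matrix n n R) * D * star (U : Matrix n n R)) ^ p).trace = (D ^ p).trace := by
  rw [← Unitary.conjStarAlgAut_apply (S := R), ← map_pow, Unitary.conjStarAlgAut_apply,
    trace_mul_cycle, Unitary.coe_star_mul_self, one_mul]

/-- The diagonal entries of `matAbs A` in its defining eigenbasis. -/
noncomputable def singularValue {N : ℕ} (A : Matrix (Fin N) (Fin N) ℂ) (i : Fin N) : ℝ :=
  √((posSemidef_self_mul_conjTranspose A).1.eigenvalues i)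

theorem singularValue_nonneg {N : ℕ} (A : Matrix (Fin N) (Fin N) ℂ) (i : Fin N) :
    0 ≤ singularValue A i :=
  Real.sqrt_nonneg _

theorem schatten_eq_sum_singularValue {N : ℕ} (p : ℕ) (A : Matrix (Fin N) (Fin N) ℂ) :
    schatten p A = ((N : ℝ)⁻¹ * ∑ i, singularValue A i ^ p) ^ (p⁻¹ : ℝ) := by
  rw [schatten, ntr, matAbs, Matrix.trace_pow_unitary_conj, diagonal_pow, trace_diagonal]
  simp [singularValue, ← Complex.ofReal_pow]

theorem schatten_nonneg {N : ℕ} (p : ℕ) (A : Matrix (Fin N) (Fin N) ℂ) : 0 ≤ schatten p A := by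
  rw [schatten_eq_sum_singularValue]
  exact Real.rpow_nonneg (mul_nonneg (by positivity)
    (Finset.sum_nonneg fun i _ => pow_nonneg (singularValue_nonneg A i) p)) _

theorem schatten_div_rpow_inv {N : ℕ} (p : ℕ) (A : Matrix (Fin N) (Fin N) ℂ) {ℓ : ℝ}
    (hℓ : 0 ≤ ℓ) :
    schatten p A / ℓ ^ (p⁻¹ : ℝ) = (∑ i, (N * ℓ)⁻¹ * singularValue A i ^ p) ^ (p⁻¹ : ℝ) := by
  rw [schatten_eq_sum_singularValue, ← Real.div_rpow _ hℓ, Finset.mul_sum, Finset.sum_div]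
  · congr 1
    exact Finset.sum_congr rfl fun i _ => by rw [mul_inv]; ring
  · exact mul_nonneg (by positivity)
      (Finset.sum_nonneg fun i _ => pow_nonneg (singularValue_nonneg A i) p)

theorem wnorm_natCast {N : ℕ} (q : ℕ) (ℓ : ℝ) (A : Matrix (Fin N) (Fin N) ℂ) :
    wnorm (q : ℕ∞) ℓ A = schatten 2 A / ℓ ^ (2⁻¹ : ℝ) + schatten q A / ℓ ^ (q⁻¹ : ℝ) := by
  simp [wnorm]

theorem wnorm_natCast_nonneg {N : ℕ} (q : ℕ) {ℓ : ℝ} (hℓ : 0 ≤ ℓ) (A : Matrix (Fin N) (Fin N) ℂ) :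
    0 ≤ wnorm (q : ℕ∞) ℓ A := by
  have := schatten_nonneg 2 A
  have := schatten_nonneg q A
  rw [wnorm_natCast]
  positivity

theorem wnorm_le_two_mul_wnorm {N : ℕ} {m k : ℕ} (hm : m ≠ 0) (hmk : m ≤ k) {ℓ : ℝ} (hℓ : 0 ≤ ℓ)
    (A : Matrix (Fin N) (Fin N) ℂ) :
    wnorm ((2 * m : ℕ) : ℕ∞) ℓ A ≤ 2 * wnorm ((2 * k : ℕ) : ℕ∞) ℓ A := by
  have interp := sum_rpow_inv_le_add Finset.univ (w := fun _ => ((N : ℝ) * ℓ)⁻¹)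
    (x := singularValue A) (fun _ _ => by positivity) (fun i _ => singularValue_nonneg A i)
    two_ne_zero (by omega : 2 ≤ 2 * m) (by omega : 2 * m ≤ 2 * k)
  simp only [← schatten_div_rpow_inv _ _ hℓ] at interp
  rw [Nat.cast_ofNat] at interp
  have h2 : 0 ≤ schatten 2 A / ℓ ^ (2⁻¹ : ℝ) := div_nonneg (schatten_nonneg 2 A) (by positivity)
  have h2k : 0 ≤ schatten (2 * k) A / ℓ ^ ((2 * k : ℕ)⁻¹ : ℝ) :=
    div_nonneg (schatten_nonneg _ A) (by positivity)
  rw [wnorm_natCast, wnorm_natCast]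
  linarith

/-- super-multiplicativity of the standard-deviation size:
`s_j(ℓ; A_1..A_j) · s_{k-j}(ℓ; A_{j+1}..A_k) ≤ C^k s_k(ℓ; A_1..A_k)`. -/
theorem s_supermultiplicative :
    ∃ C : ℝ, 0 < C ∧ ∀ (N k j : ℕ) (ℓ : ℝ) (A : ℕ → Matrix (Fin N) (Fin N) ℂ),
      0 < ℓ → 1 ≤ j → j < k → (∀ i < k, (A i).trace = 0) →
      (∏ i ∈ Finset.range j, wnorm ((2 * j : ℕ) : ℕ∞) ℓ (A i)) *
        (∏ i ∈ Finset.Ico j k, wnorm ((2 * (k - j) : ℕ) : ℕ∞) ℓ (A i))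
      ≤ C ^ k * ∏ i ∈ Finset.range k, wnorm ((2 * k : ℕ) : ℕ∞) ℓ (A i) := by
  refine ⟨2, two_pos, fun N k j ℓ A hℓ hj hjk _ => ?_⟩
  have hW : ∀ q i, 0 ≤ wnorm ((q : ℕ) : ℕ∞) ℓ (A i) := fun q i => wnorm_natCast_nonneg q hℓ.le _
  calc (∏ i ∈ Finset.range j, wnorm ((2 * j : ℕ) : ℕ∞) ℓ (A i)) *
        (∏ i ∈ Finset.Ico j k, wnorm ((2 * (k - j) : ℕ) : ℕ∞) ℓ (A i))
      ≤ (∏ i ∈ Finset.range j, 2 * wnorm ((2 * k : ℕ) : ℕ∞) ℓ (A i)) *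
        (∏ i ∈ Finset.Ico j k, 2 * wnorm ((2 * k : ℕ) : ℕ∞) ℓ (A i)) := by
        refine mul_le_mul ?_ ?_ (Finset.prod_nonneg fun i _ => hW _ i)
          (Finset.prod_nonneg fun i _ => mul_nonneg zero_le_two (hW _ i))
        · exact Finset.prod_le_prod (fun i _ => hW _ i)
            fun i _ => wnorm_le_two_mul_wnorm (by omega) hjk.le hℓ.le _
        · exact Finset.prod_le_prod (fun i _ => hW _ i)
            fun i _ => wnorm_le_two_mul_wnorm (by omega) (by omega) hℓ.le _
    _ = 2 ^ k * ∏ i ∈ Finset.range k, wnorm ((2 * k : ℕ) : ℕ∞) ℓ (A i) := by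
        rw [Finset.prod_range_mul_prod_Ico _ hjk.le, Finset.prod_mul_distrib, Finset.prod_const,
          Finset.card_range]
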